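/- For A = [[1,2],[0,1]] and B = [[1,0],[2,1]], every entry of any product of n matrices, each equal to A or B, is a nonnegative integer bounded above by (1+√2)^{n+1}. -/

import Mathlib

/-!
Both matrices have nonnegative entries, hence so does every product of them. For the upper
bound, look at a column `(x, y)` of the product: multiplying on the left by `A` or `B` sends it
to `(x + 2y, y)` or `(x, 2x + y)`, and the operator norm of either matrix is `1 + √2` (the
eigenvalues of `AᵀA` are `3 ± 2√2`). So each column has Euclidean length at most `(1 + √2)ⁿ`.
-/

open Real Matrix

theorem Matrix.list_prod_apply_nonneg {n R : Type*} [Fintype n] [DecidableEq n] [Semiring R]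
    [PartialOrder R] [IsOrderedRing R] (l : List (Matrix n n R))
    (hl : ∀ M ∈ l, ∀ i j, 0 ≤ M i j) (i j : n) : 0 ≤ l.prod i j := by
  induction l generalizing i j with
  | nil => by_cases h : i = j <;> simp [h]
  | cons M t ih =>
    rw [List.prod_cons, mul_apply]
    exact Finset.sum_nonneg fun k _ ↦ mul_nonneg (hl M (by simp) i k)
      (ih (fun N hN ↦ hl N (List.mem_cons_of_mem _ hN)) k j)

theorem sq_add_two_mul_add_sq_le (x y : ℝ) :
    (x + 2 * y) ^ 2 + y ^ 2 ≤ (1 + √2) ^ 2 * (x ^ 2 + y ^ 2) := by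
  have hs : √2 ^ 2 = 2 := sq_sqrt zero_le_two
  have hdiff : (1 + √2) ^ 2 * (x ^ 2 + y ^ 2) - ((x + 2 * y) ^ 2 + y ^ 2)
      = 2 * (1 + √2) * (x - (√2 - 1) * y) ^ 2 := by
    linear_combination (x ^ 2 + 4 * x * y + (3 - 2 * √2) * y ^ 2) * hs
  have : 0 ≤ 2 * (1 + √2) * (x - (√2 - 1) * y) ^ 2 := by positivity
  linarith

theorem sum_sq_mulVec_le_of_eq_or_eq {M : Matrix (Fin 2) (Fin 2) ℤ}
    (hM : M = !![1, 2; 0, 1] ∨ M = !![1, 0; 2, 1]) (v : Fin 2 → ℤ) :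
    ∑ i, ((M *ᵥ v) i : ℝ) ^ 2 ≤ (1 + √2) ^ 2 * ∑ i, (v i : ℝ) ^ 2 := by
  rcases hM with rfl | rfl <;> simp [Fin.sum_univ_two, mulVec, dotProduct]
  · linarith [sq_add_two_mul_add_sq_le (v 0) (v 1)]
  · linarith [sq_add_two_mul_add_sq_le (v 1) (v 0)]

theorem sum_sq_list_prod_mulVec_le (l : List (Matrix (Fin 2) (Fin 2) ℤ))
    (hl : ∀ M ∈ l, M = !![1, 2; 0, 1] ∨ M = !![1, 0; 2, 1]) (v : Fin 2 → ℤ) :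
    ∑ i, ((l.prod *ᵥ v) i : ℝ) ^ 2 ≤ ((1 + √2) ^ 2) ^ l.length * ∑ i, (v i : ℝ) ^ 2 := by
  induction l with
  | nil => simp
  | cons M t ih =>
    rw [List.prod_cons, ← mulVec_mulVec, List.length_cons, pow_succ', mul_assoc]
    calc ∑ i, ((M *ᵥ t.prod *ᵥ v) i : ℝ) ^ 2
        ≤ (1 + √2) ^ 2 * ∑ i, ((t.prod *ᵥ v) i : ℝ) ^ 2 :=
          sum_sq_mulVec_le_of_eq_or_eq (hl M (by simp)) _
      _ ≤ _ := by
          gcongr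
          exact ih fun N hN ↦ hl N (List.mem_cons_of_mem _ hN)

theorem list_prod_apply_le (l : List (Matrix (Fin 2) (Fin 2) ℤ))
    (hl : ∀ M ∈ l, M = !![1, 2; 0, 1] ∨ M = !![1, 0; 2, 1]) (i j : Fin 2) :
    (l.prod i j : ℝ) ≤ (1 + √2) ^ l.length := by
  have hcol := sum_sq_list_prod_mulVec_le l hl (Pi.single j 1)
  rw [mulVec_single_one] at hcol
  refine le_of_sq_le_sq ?_ (by positivity)
  calc (l.prod i j : ℝ) ^ 2 ≤ ∑ k, ((l.prod)ᵀ j k : ℝ) ^ 2 :=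
        Finset.single_le_sum (f := fun k ↦ ((l.prod)ᵀ j k : ℝ) ^ 2)
          (fun _ _ ↦ sq_nonneg _) (Finset.mem_univ i)
    _ ≤ ((1 + √2) ^ 2) ^ l.length * ∑ k, ((Pi.single j 1 : Fin 2 → ℤ) k : ℝ) ^ 2 := hcol
    _ = ((1 + √2) ^ l.length) ^ 2 := by fin_cases j <;> simp [← pow_mul, mul_comm]

theorem entries_of_products_bounded
    (A B : Matrix (Fin 2) (Fin 2) ℤ)
    (hA : A = !![1, 2; 0, 1]) (hB : B = !![1, 0; 2, 1])
    (l : List (Matrix (Fin 2) (Fin 2) ℤ)) (hl : ∀ M ∈ l, M = A ∨ M = B) :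
    ∀ i j : Fin 2, 0 ≤ l.prod i j ∧
      (l.prod i j : ℝ) ≤ (1 + Real.sqrt 2) ^ (l.length + 1) := by
  subst hA hB
  intro i j
  have hnonneg : ∀ M ∈ l, ∀ i j, 0 ≤ M i j := by
    intro M hM i j
    rcases hl M hM with rfl | rfl <;> fin_cases i <;> fin_cases j <;> simp
  refine ⟨Matrix.list_prod_apply_nonneg l hnonneg i j, ?_⟩
  calc (l.prod i j : ℝ) ≤ (1 + √2) ^ l.length := list_prod_apply_le l hl i j
    _ ≤ (1 + √2) ^ (l.length + 1) :=
      pow_le_pow_right₀ (le_add_of_nonneg_right (sqrt_nonneg 2)) l.length.le_succ
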